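/- arXiv:2106.03529 — 3 statements merged into one kernel-verified Lean document; each statement's English description precedes it below -/
import Mathlib

section
/- Let d ≥ 2 and let a_{ij} ∈ ℝ for i,j ∈ {1,...,d}. Set A_i = Σ_j a_{ij} and A^j = Σ_i a_{ij}. Suppose (1) Σ_i A_i = 0 and (2) there is a constant c with 0 < c < 1/d such that a_{ij}/A_i > c for all i,j (in particular each A_i ≠ 0 and all a_{ij} in row i share the sign of A_i). Then Σ_j |A^j| ≤ (1 - 2c) Σ_i |A_i|. -/
/-! Subtracting `c · A_i` from every entry of row `i` leaves the column sums unchanged (the `A_i`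
sum to zero) and scales the row sums to `(1 - d c) A_i`. The balance hypothesis says exactly that
each shifted row has entries of a single sign, so its absolute row sum equals the sum of the
absolute values of its entries, and the triangle inequality in each column gives
`∑_j |A^j| ≤ (1 - d c) ∑_i |A_i| ≤ (1 - 2 c) ∑_i |A_i|`. -/

open Finset

section SignConstantRows

variable {ι κ G : Type*} [Fintype ι] [Fintype κ]
  [AddCommGroup G] [LinearOrder G] [IsOrderedAddMonoid G]

theorem abs_sum_eq_sum_abs_of_nonneg_or_nonpos {f : κ → G}
    (hf : (∀ j, 0 ≤ f j) ∨ ∀ j, f j ≤ 0) : |∑ j, f j| = ∑ j, |f j| := by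
  rcases hf with hf | hf
  · rw [abs_sum_of_nonneg' hf]
    exact sum_congr rfl fun j _ => (abs_of_nonneg (hf j)).symm
  · rw [abs_of_nonpos (sum_nonpos fun j _ => hf j), ← sum_neg_distrib]
    exact sum_congr rfl fun j _ => (abs_of_nonpos (hf j)).symm

theorem sum_abs_colSum_le_sum_abs_rowSum (b : ι → κ → G)
    (hb : ∀ i, (∀ j, 0 ≤ b i j) ∨ ∀ j, b i j ≤ 0) :
    ∑ j, |∑ i, b i j| ≤ ∑ i, |∑ j, b i j| :=
  calc ∑ j, |∑ i, b i j| ≤ ∑ j, ∑ i, |b i j| := sum_le_sum fun _ _ => abs_sum_le_sum_abs _ _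
    _ = ∑ i, ∑ j, |b i j| := sum_comm
    _ = ∑ i, |∑ j, b i j| :=
      sum_congr rfl fun i _ => (abs_sum_eq_sum_abs_of_nonneg_or_nonpos (hb i)).symm

end SignConstantRows

theorem sub_mul_sum_nonneg_or_nonpos {κ : Type*} [Fintype κ] {r : κ → ℝ} {c : ℝ} (hc : 0 ≤ c)
    (hr : ∀ j, c < r j / ∑ k, r k) :
    (∀ j, 0 ≤ r j - c * ∑ k, r k) ∨ ∀ j, r j - c * ∑ k, r k ≤ 0 := by
  rcases lt_trichotomy (∑ k, r k) 0 with hneg | hzero | hpos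
  · exact .inr fun j => by linarith [(lt_div_iff_of_neg hneg).mp (hr j)]
  · exact .inl fun j => absurd (hr j) (by simpa [hzero] using hc)
  · exact .inl fun j => by linarith [(lt_div_iff₀ hpos).mp (hr j)]

/-- Combinatorial lemma: if the row sums `A_i` of a `d × d` real matrix sum to zero
and each entry satisfies `a i j / A_i > c` for some `0 < c < 1/d`, then the total
absolute column sums contract by the factor `1 - 2c` compared to the total absolute
row sums. -/
theorem stmt_0 (d : ℕ) (hd : 2 ≤ d) (a : Fin d → Fin d → ℝ) (c : ℝ)
    (hc0 : 0 < c) (hc1 : c < 1 / (d : ℝ))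
    (hzero : ∑ i, ∑ j, a i j = 0)
    (hbal : ∀ i j, c < a i j / (∑ k, a i k)) :
    ∑ j, |∑ i, a i j| ≤ (1 - 2 * c) * ∑ i, |∑ j, a i j| := by
  set b : Fin d → Fin d → ℝ := fun i j => a i j - c * ∑ k, a i k
  have hcol : ∀ j, ∑ i, b i j = ∑ i, a i j := fun j => by
    simp only [b, sum_sub_distrib, ← mul_sum, hzero, mul_zero, sub_zero]
  have hrow : ∀ i, ∑ j, b i j = (1 - d * c) * ∑ j, a i j := fun i => by
    simp only [b, sum_sub_distrib, sum_const, card_univ, Fintype.card_fin, nsmul_eq_mul]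
    ring
  have hd2 : (2 : ℝ) ≤ d := by exact_mod_cast hd
  have hdc : 0 ≤ 1 - d * c := by
    rw [lt_div_iff₀ (by positivity)] at hc1
    linarith
  calc ∑ j, |∑ i, a i j| = ∑ j, |∑ i, b i j| := by simp only [hcol]
    _ ≤ ∑ i, |∑ j, b i j| :=
      sum_abs_colSum_le_sum_abs_rowSum b fun i => sub_mul_sum_nonneg_or_nonpos hc0.le (hbal i)
    _ = (1 - d * c) * ∑ i, |∑ j, a i j| := by
      simp only [hrow, abs_mul, abs_of_nonneg hdc, ← mul_sum]
    _ ≤ (1 - 2 * c) * ∑ i, |∑ j, a i j| := by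
      gcongr
end

section
/- Let T : [0,1] → [0,1] be a map, J ⊂ [0,1] an interval, and n ≥ 1 such that T is C² with DT > 0 on each of the intervals J, T(J), ..., T^{n-1}(J), and such that these intervals are pairwise disjoint. Then for all x, y ∈ J, (D T^n)(x) / (D T^n)(y) ≤ exp(∫₀¹ |η_T(t)| dt), where η_T = D²T/DT is defined on the union of intervals where T is C² with DT > 0 (and extended by 0 elsewhere). -/
/-! `log DT^n(x) - log DT^n(y)` is the sum over `i < n` of `log T'(T^i x) - log T'(T^i y)`, and by
the fundamental theorem of calculus applied to `log ∘ T'` each summand is at most `∫ |η|` over the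
interval between `T^i y` and `T^i x`. These intervals lie in the pairwise disjoint images `T^i(J)`,
so their total contribution is at most `∫₀¹ |η|`. -/

open Set MeasureTheory Finset

theorem ordConnected_image_iterate {T : ℝ → ℝ} {s : Set ℝ} {n : ℕ} (hs : s.OrdConnected)
    (hT : ∀ i < n, ContinuousOn T (T^[i] '' s)) : ∀ i ≤ n, (T^[i] '' s).OrdConnected := by
  intro i hi
  induction i with
  | zero => simpa using hs
  | succ k ih =>
    rw [Function.iterate_succ', image_comp]
    exact ((ih (by omega)).isPreconnected.image T (hT k (by omega))).ordConnected

theorem hasDerivAt_iterate_of_hasDerivAt {T T' : ℝ → ℝ} {z : ℝ} {n : ℕ}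
    (hT : ∀ i < n, HasDerivAt T (T' (T^[i] z)) (T^[i] z)) :
    HasDerivAt T^[n] (∏ i ∈ range n, T' (T^[i] z)) z := by
  induction n with
  | zero => simpa using hasDerivAt_id z
  | succ k ih =>
    rw [prod_range_succ, mul_comm, Function.iterate_succ']
    exact (hT k k.lt_succ_self).comp z (ih fun i hi => hT i (by omega))

theorem prod_div_prod_eq_exp_sum_log_sub {ι : Type*} {s : Finset ι} {a b : ι → ℝ}
    (ha : ∀ i ∈ s, 0 < a i) (hb : ∀ i ∈ s, 0 < b i) :
    (∏ i ∈ s, a i) / ∏ i ∈ s, b i =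
      Real.exp (∑ i ∈ s, (Real.log (a i) - Real.log (b i))) := by
  rw [Real.exp_sum, ← prod_div_distrib]
  refine prod_congr rfl fun i hi => ?_
  rw [Real.exp_sub, Real.exp_log (ha i hi), Real.exp_log (hb i hi)]

theorem sub_le_setIntegral_uIoc_abs_of_hasDerivAt {f f' : ℝ → ℝ} {a b : ℝ}
    (hf : ∀ t ∈ uIcc a b, HasDerivAt f (f' t) t) (hf' : IntervalIntegrable f' volume a b) :
    f b - f a ≤ ∫ t in uIoc a b, |f' t| := by
  rw [← intervalIntegral.integral_eq_sub_of_hasDerivAt hf hf']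
  exact (le_abs_self _).trans (intervalIntegral.norm_integral_le_integral_norm_uIoc (f := f'))

theorem log_sub_log_le_setIntegral_uIoc_abs {g g' η : ℝ → ℝ} {a b : ℝ}
    (hg : ∀ t ∈ uIcc a b, HasDerivAt g (g' t) t) (hg0 : ∀ t ∈ uIcc a b, 0 < g t)
    (hη : ∀ t ∈ uIcc a b, η t = g' t / g t) (hηi : IntervalIntegrable η volume a b) :
    Real.log (g b) - Real.log (g a) ≤ ∫ t in uIoc a b, |η t| :=
  sub_le_setIntegral_uIoc_abs_of_hasDerivAt (f := fun t => Real.log (g t))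
    (fun t ht => hη t ht ▸ (hg t ht).log (hg0 t ht).ne') hηi

theorem sum_setIntegral_le_setIntegral_of_pairwiseDisjoint {X ι : Type*} [MeasurableSpace X]
    {μ : Measure X} {f : X → ℝ} {s : Set X} {S : ι → Set X} {I : Finset ι}
    (hs : MeasurableSet s) (hf : IntegrableOn f s μ) (hf0 : ∀ x ∈ s, 0 ≤ f x)
    (hS : ∀ i ∈ I, MeasurableSet (S i)) (hSs : ∀ i ∈ I, S i ⊆ s)
    (hdisj : (I : Set ι).PairwiseDisjoint S) :
    ∑ i ∈ I, ∫ x in S i, f x ∂μ ≤ ∫ x in s, f x ∂μ := by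
  rw [← integral_biUnion_finset I hS hdisj fun i hi => hf.mono_set (hSs i hi)]
  exact setIntegral_mono_set hf ((ae_restrict_iff' hs).2 (ae_of_all _ hf0))
    (iUnion₂_subset hSs).eventuallyLE

theorem stmt_7_general (T T' T'' η : ℝ → ℝ) (J : Set ℝ) (n : ℕ)
    (hJconn : J.OrdConnected)
    (himg : ∀ i < n, T^[i] '' J ⊆ Icc (0:ℝ) 1)
    (hdisj : ∀ i < n, ∀ j < n, i ≠ j → Disjoint (T^[i] '' J) (T^[j] '' J))
    (hT : ∀ i < n, ∀ x ∈ T^[i] '' J, HasDerivAt T (T' x) x)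
    (hT' : ∀ i < n, ∀ x ∈ T^[i] '' J, HasDerivAt T' (T'' x) x)
    (hpos : ∀ i < n, ∀ x ∈ T^[i] '' J, 0 < T' x)
    (hη : ∀ i < n, ∀ x ∈ T^[i] '' J, η x = T'' x / T' x)
    (hint : IntervalIntegrable η MeasureTheory.volume 0 1) :
    ∀ x ∈ J, ∀ y ∈ J,
      deriv (T^[n]) x / deriv (T^[n]) y ≤ Real.exp (∫ t in (0:ℝ)..1, |η t|) := by
  intro x hx y hy
  have hmem : ∀ z ∈ J, ∀ i, T^[i] z ∈ T^[i] '' J := fun z hz i => mem_image_of_mem _ hz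
  have hseg : ∀ i ∈ range n, uIcc (T^[i] y) (T^[i] x) ⊆ T^[i] '' J := fun i hi =>
    (ordConnected_image_iterate hJconn
      (fun k hk z hz => (hT k hk z hz).continuousAt.continuousWithinAt) i (mem_range.1 hi).le
      ).uIcc_subset (hmem y hy i) (hmem x hx i)
  have hseg01 : ∀ i ∈ range n, uIcc (T^[i] y) (T^[i] x) ⊆ Icc 0 1 := fun i hi =>
    (hseg i hi).trans (himg i (mem_range.1 hi))
  rw [(hasDerivAt_iterate_of_hasDerivAt fun i hi => hT i hi _ (hmem x hx i)).deriv,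
    (hasDerivAt_iterate_of_hasDerivAt fun i hi => hT i hi _ (hmem y hy i)).deriv,
    prod_div_prod_eq_exp_sum_log_sub (fun i hi => hpos i (mem_range.1 hi) _ (hmem x hx i))
      (fun i hi => hpos i (mem_range.1 hi) _ (hmem y hy i)),
    Real.exp_le_exp, intervalIntegral.integral_of_le zero_le_one, ← integral_Icc_eq_integral_Ioc]
  calc ∑ i ∈ range n, (Real.log (T' (T^[i] x)) - Real.log (T' (T^[i] y)))
      ≤ ∑ i ∈ range n, ∫ t in uIoc (T^[i] y) (T^[i] x), |η t| := by
        refine sum_le_sum fun i hi => ?_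
        have hi' := mem_range.1 hi
        exact log_sub_log_le_setIntegral_uIoc_abs (g' := T'')
          (fun t ht => hT' i hi' t (hseg i hi ht)) (fun t ht => hpos i hi' t (hseg i hi ht))
          (fun t ht => hη i hi' t (hseg i hi ht))
          (hint.mono_set (Set.uIcc_of_le (zero_le_one (α := ℝ)) ▸ hseg01 i hi))
    _ ≤ ∫ t in Icc 0 1, |η t| :=
        sum_setIntegral_le_setIntegral_of_pairwiseDisjoint measurableSet_Icc
          ((intervalIntegrable_iff_integrableOn_Icc_of_le zero_le_one).1 hint.abs)
          (fun _ _ => abs_nonneg _) (fun _ _ => measurableSet_uIoc)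
          (fun i hi => uIoc_subset_uIcc.trans (hseg01 i hi))
          fun i hi j hj hij => (hdisj i (mem_range.1 hi) j (mem_range.1 hj) hij).mono
            (uIoc_subset_uIcc.trans (hseg i hi)) (uIoc_subset_uIcc.trans (hseg j hj))

/-- Distortion bound: if `J ⊆ [0,1]` is an interval whose images
`J, T(J), …, T^{n-1}(J)` are pairwise disjoint, stay in `[0,1]`, and on each of which
`T` is `C²` with positive derivative, then for all `x, y ∈ J` the distortion
`DT^n(x)/DT^n(y)` is bounded by `exp (∫₀¹ |η_T|)`, where `η_T = T''/T'` on the union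
of those intervals (extended arbitrarily elsewhere, with `η` interval-integrable). -/
theorem stmt_7 (T T' T'' η : ℝ → ℝ) (J : Set ℝ) (n : ℕ) (hn : 1 ≤ n)
    (hJ : J ⊆ Icc (0:ℝ) 1) (hJconn : J.OrdConnected)
    (himg : ∀ i < n, T^[i] '' J ⊆ Icc (0:ℝ) 1)
    (hdisj : ∀ i < n, ∀ j < n, i ≠ j → Disjoint (T^[i] '' J) (T^[j] '' J))
    (hT : ∀ i < n, ∀ x ∈ T^[i] '' J, HasDerivAt T (T' x) x)
    (hT' : ∀ i < n, ∀ x ∈ T^[i] '' J, HasDerivAt T' (T'' x) x)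
    (hpos : ∀ i < n, ∀ x ∈ T^[i] '' J, 0 < T' x)
    (hη : ∀ i < n, ∀ x ∈ T^[i] '' J, η x = T'' x / T' x)
    (hint : IntervalIntegrable η MeasureTheory.volume 0 1) :
    ∀ x ∈ J, ∀ y ∈ J,
      deriv (T^[n]) x / deriv (T^[n]) y ≤ Real.exp (∫ t in (0:ℝ)..1, |η t|) :=
  stmt_7_general T T' T'' η J n hJconn himg hdisj hT hT' hpos hη hint
end

section
/- Let f₁, f₂ be orientation-preserving C² diffeomorphisms of [0,1] (fixing 0 and 1). Then there exists a point x₀ ∈ [0,1] with f₁'(x₀) = f₂'(x₀), and consequently for every x ∈ [0,1], |log f₁'(x) − log f₂'(x)| ≤ ∫₀¹ |η_{f₁}(t) − η_{f₂}(t)| dt. -/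
/-!
Both derivatives integrate to `1` over `[0,1]`, so by the mean value theorem for integrals they
agree at some `x₀`. The function `log f₁' - log f₂'` vanishes at `x₀` and has derivative
`η_{f₁} - η_{f₂}`, so the fundamental theorem of calculus bounds it by `∫₀¹ |η_{f₁} - η_{f₂}|`.
-/

open Set MeasureTheory intervalIntegral

/-- The non-linearity `η_h = h''/h'` of a map `h : [0,1] → ℝ`, computed with
derivatives within `[0,1]`. -/
noncomputable def nlOn (h : ℝ → ℝ) (x : ℝ) : ℝ :=
  derivWithin (derivWithin h (Icc (0:ℝ) 1)) (Icc (0:ℝ) 1) x /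
    derivWithin h (Icc (0:ℝ) 1) x

section IntervalIntegral

variable {a b : ℝ}

theorem exists_mem_uIoo_eq_of_intervalIntegral_eq {g₁ g₂ : ℝ → ℝ} (hab : a ≠ b)
    (hg₁ : ContinuousOn g₁ (uIcc a b)) (hg₂ : ContinuousOn g₂ (uIcc a b))
    (h : ∫ x in a..b, g₁ x = ∫ x in a..b, g₂ x) :
    ∃ c ∈ uIoo a b, g₁ c = g₂ c := by
  obtain ⟨c, hc, hgc⟩ := exists_eq_interval_average hab (hg₁.sub hg₂)
  have hint : ∫ x in a..b, (g₁ - g₂) x = 0 := by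
    rw [Pi.sub_def, integral_sub hg₁.intervalIntegrable hg₂.intervalIntegrable, h, sub_self]
  rw [interval_average_eq_div, hint, zero_div, Pi.sub_apply, sub_eq_zero] at hgc
  exact ⟨c, hc, hgc⟩

theorem abs_sub_le_integral_abs_of_hasDerivWithinAt {L L' : ℝ → ℝ}
    (hL : ∀ t ∈ Icc a b, HasDerivWithinAt L (L' t) (Icc a b) t)
    (hL' : IntervalIntegrable L' volume a b) {x y : ℝ} (hx : x ∈ Icc a b) (hy : y ∈ Icc a b) :
    |L x - L y| ≤ ∫ t in a..b, |L' t| := by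
  wlog hyx : y ≤ x generalizing x y
  · rw [abs_sub_comm]
    exact this hy hx (le_of_not_ge hyx)
  have hsub : Icc y x ⊆ Icc a b := Icc_subset_Icc hy.1 hx.2
  have hftc : ∫ t in y..x, L' t = L x - L y := by
    refine integral_eq_sub_of_hasDerivAt_of_le hyx
      (fun t ht => (hL t (hsub ht)).continuousWithinAt.mono hsub) (fun t ht => ?_)
      (hL'.mono_set ?_)
    · have ht' : t ∈ Ioo a b := ⟨hy.1.trans_lt ht.1, ht.2.trans_le hx.2⟩
      exact (hL t (Ioo_subset_Icc_self ht')).hasDerivAt (Icc_mem_nhds ht'.1 ht'.2)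
    · rw [uIcc_of_le hyx, uIcc_of_le (hy.1.trans (hyx.trans hx.2))]
      exact hsub
  calc |L x - L y| = |∫ t in y..x, L' t| := by rw [hftc]
    _ ≤ ∫ t in y..x, |L' t| := abs_integral_le_integral_abs hyx
    _ ≤ ∫ t in a..b, |L' t| :=
      integral_mono_interval hy.1 hyx hx.2 (Filter.Eventually.of_forall fun t => abs_nonneg _)
        hL'.abs

end IntervalIntegral

section LogDeriv

variable {f : ℝ → ℝ} {s : Set ℝ}

theorem ContDiffOn.hasDerivWithinAt_log_derivWithin (hf : ContDiffOn ℝ 2 f s)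
    (hs : UniqueDiffOn ℝ s) {x : ℝ} (hx : x ∈ s) (hfx : derivWithin f s x ≠ 0) :
    HasDerivWithinAt (fun t => Real.log (derivWithin f s t))
      (derivWithin (derivWithin f s) s x / derivWithin f s x) s x :=
  ((hf.derivWithin hs (m := 1) le_rfl).differentiableOn one_ne_zero x hx).hasDerivWithinAt.log hfx

theorem ContDiffOn.continuousOn_derivWithin_derivWithin_div (hf : ContDiffOn ℝ 2 f s)
    (hs : UniqueDiffOn ℝ s) (hf' : ∀ x ∈ s, derivWithin f s x ≠ 0) :
    ContinuousOn (fun x => derivWithin (derivWithin f s) s x / derivWithin f s x) s :=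
  ((hf.derivWithin hs (m := 1) le_rfl).continuousOn_derivWithin hs le_rfl).div
    (hf.continuousOn_derivWithin hs one_le_two) hf'

end LogDeriv

/-- For orientation-preserving `C²` diffeomorphisms `f₁, f₂` of `[0,1]` fixing `0`
and `1`, the derivatives agree at some point `x₀ ∈ [0,1]`, and consequently
`|log f₁'(x) - log f₂'(x)| ≤ ∫₀¹ |η_{f₁} - η_{f₂}|` for every `x ∈ [0,1]`. -/
theorem stmt_13 (f₁ f₂ : ℝ → ℝ)
    (h₁ : ContDiffOn ℝ 2 f₁ (Icc (0:ℝ) 1))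
    (h₂ : ContDiffOn ℝ 2 f₂ (Icc (0:ℝ) 1))
    (h₁0 : f₁ 0 = 0) (h₁1 : f₁ 1 = 1) (h₂0 : f₂ 0 = 0) (h₂1 : f₂ 1 = 1)
    (h₁' : ∀ x ∈ Icc (0:ℝ) 1, 0 < derivWithin f₁ (Icc (0:ℝ) 1) x)
    (h₂' : ∀ x ∈ Icc (0:ℝ) 1, 0 < derivWithin f₂ (Icc (0:ℝ) 1) x) :
    (∃ x₀ ∈ Icc (0:ℝ) 1,
        derivWithin f₁ (Icc (0:ℝ) 1) x₀ = derivWithin f₂ (Icc (0:ℝ) 1) x₀) ∧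
    ∀ x ∈ Icc (0:ℝ) 1,
      |Real.log (derivWithin f₁ (Icc (0:ℝ) 1) x) -
          Real.log (derivWithin f₂ (Icc (0:ℝ) 1) x)|
        ≤ ∫ t in (0:ℝ)..1, |nlOn f₁ t - nlOn f₂ t| := by
  have hs : UniqueDiffOn ℝ (Icc (0:ℝ) 1) := uniqueDiffOn_Icc one_pos
  have hI : uIcc (0:ℝ) 1 = Icc 0 1 := uIcc_of_le zero_le_one
  have hint : ∫ t in (0:ℝ)..1, derivWithin f₁ (Icc 0 1) t =
      ∫ t in (0:ℝ)..1, derivWithin f₂ (Icc 0 1) t := by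
    rw [integral_derivWithin_Icc_of_contDiffOn_Icc (h₁.of_le one_le_two) zero_le_one,
      integral_derivWithin_Icc_of_contDiffOn_Icc (h₂.of_le one_le_two) zero_le_one,
      h₁0, h₁1, h₂0, h₂1]
  obtain ⟨x₀, hx₀, heq⟩ := exists_mem_uIoo_eq_of_intervalIntegral_eq (zero_ne_one' ℝ)
    (hI ▸ h₁.continuousOn_derivWithin hs one_le_two)
    (hI ▸ h₂.continuousOn_derivWithin hs one_le_two) hint
  have hx₀' : x₀ ∈ Icc (0:ℝ) 1 := Ioo_subset_Icc_self (uIoo_of_lt (zero_lt_one' ℝ) ▸ hx₀)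
  refine ⟨⟨x₀, hx₀', heq⟩, fun x hx => ?_⟩
  have hne₁ x (hx : x ∈ Icc (0:ℝ) 1) := (h₁' x hx).ne'
  have hne₂ x (hx : x ∈ Icc (0:ℝ) 1) := (h₂' x hx).ne'
  have hη : ContinuousOn (fun t => nlOn f₁ t - nlOn f₂ t) (Icc 0 1) :=
    (h₁.continuousOn_derivWithin_derivWithin_div hs hne₁).sub
      (h₂.continuousOn_derivWithin_derivWithin_div hs hne₂)
  simpa [heq] using abs_sub_le_integral_abs_of_hasDerivWithinAt (L' := fun t => nlOn f₁ t - nlOn f₂ t)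
    (fun t ht => (h₁.hasDerivWithinAt_log_derivWithin hs ht (hne₁ t ht)).sub
      (h₂.hasDerivWithinAt_log_derivWithin hs ht (hne₂ t ht)))
    (hη.intervalIntegrable_of_Icc zero_le_one) hx hx₀'
end
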